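/- For a map Γ : [0,1]^n → [0,1]^n of the form Γ_i(p) = F(α_i + β^h(Σ_j g_{ij}p_j − 1/2) + (Δβ/2)·g_i Σ(p) g_i'), where Σ(p) = p p' + diag(p∘(1−p)), F is a differentiable CDF with density f bounded by f_max, G = [g_{ij}] is row-stochastic with nonnegative entries, and |β^h| + (3/2)|Δβ| < 1/f_max, the map Γ is a contraction with respect to the sup-norm and therefore has a unique fixed point in [0,1]^n. -/

import Mathlib

/-!
On the box `[0,1]^n` each argument of `F` moves by at most `(|βh| + 3/2 |Δβ|) ‖p - q‖∞`:
the weighted mean `g_i p` is 1-Lipschitz because `g_i` is a probability vector, its square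
is 2-Lipschitz because the mean lies in `[0,1]`, and the variance part `∑ g_ij² p_j (1 - p_j)`
is 1-Lipschitz because `g_ij² ≤ g_ij`. The mean value inequality for `F` multiplies this by
`fmax`, and Banach's fixed point theorem on the closed box gives the fixed point.
-/

open Finset Set

theorem abs_sub_le_mul_of_hasDerivAt {F f : ℝ → ℝ} {C : ℝ} (hF : ∀ u, HasDerivAt F (f u) u)
    (hf : ∀ u, |f u| ≤ C) (a b : ℝ) : |F a - F b| ≤ C * |a - b| := by
  simpa only [Real.norm_eq_abs] using
    convex_univ.norm_image_sub_le_of_norm_hasDerivWithin_le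
      (fun u _ => (hF u).hasDerivWithinAt) (fun u _ => hf u) (mem_univ b) (mem_univ a)

theorem exists_unique_fixedPoint_of_dist_le {X : Type*} [MetricSpace X] [CompleteSpace X]
    {s : Set X} (hs : IsClosed s) (hne : s.Nonempty) {f : X → X} (hfs : MapsTo f s s)
    {K : ℝ} (hK0 : 0 ≤ K) (hK1 : K < 1)
    (hf : ∀ x ∈ s, ∀ y ∈ s, dist (f x) (f y) ≤ K * dist x y) :
    ∃! x, x ∈ s ∧ f x = x := by
  have hcontr : ContractingWith ⟨K, hK0⟩ (hfs.restrict f s s) :=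
    ⟨by exact_mod_cast hK1, LipschitzWith.of_dist_le_mul fun x y => hf x x.2 y y.2⟩
  obtain ⟨x, hxs, hfx, -⟩ :=
    hcontr.exists_fixedPoint' hs.isComplete hfs hne.some_mem (edist_ne_top _ _)
  refine ⟨x, ⟨hxs, hfx⟩, fun y ⟨hys, hfy⟩ => dist_le_zero.1 ?_⟩
  have h := hf y hys x hxs
  rw [hfy, hfx.eq] at h
  nlinarith [dist_nonneg (x := y) (y := x)]

section WeightedSums

variable {ι : Type*} [Fintype ι] {w : ι → ℝ}

/-- `g Σ(p) gᵀ` for a row `g = w`: the second moment of `∑ j, w j * a j` for independent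
Bernoulli variables `a j` with means `p j`, since `Σ(p) = p pᵀ + diag(p (1 - p))` is their
second-moment matrix. -/
def weightedSecondMoment (w p : ι → ℝ) : ℝ :=
  (∑ j, w j * p j) ^ 2 + ∑ j, w j ^ 2 * p j * (1 - p j)

noncomputable def conformityIndex (w : ι → ℝ) (βh Δβ : ℝ) (p : ι → ℝ) : ℝ :=
  βh * ((∑ j, w j * p j) - 1 / 2) + (Δβ / 2) * weightedSecondMoment w p

theorem weightedSum_mem_Icc (hw0 : ∀ j, 0 ≤ w j) (hw1 : ∑ j, w j = 1) {p : ι → ℝ}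
    (hp : ∀ j, p j ∈ Icc (0 : ℝ) 1) : ∑ j, w j * p j ∈ Icc (0 : ℝ) 1 := by
  refine ⟨sum_nonneg fun j _ => mul_nonneg (hw0 j) (hp j).1, ?_⟩
  calc ∑ j, w j * p j ≤ ∑ j, w j := sum_le_sum fun j _ => mul_le_of_le_one_right (hw0 j) (hp j).2
    _ = 1 := hw1

theorem abs_sum_sub_sum_le (hw1 : ∑ j, w j = 1) {a b : ι → ℝ} {d : ℝ}
    (h : ∀ j, |a j - b j| ≤ w j * d) : |∑ j, a j - ∑ j, b j| ≤ d :=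
  calc |∑ j, a j - ∑ j, b j| ≤ ∑ j, |a j - b j| := by
        rw [← sum_sub_distrib]; exact abs_sum_le_sum_abs _ _
    _ ≤ ∑ j, w j * d := sum_le_sum fun j _ => h j
    _ = d := by rw [← sum_mul, hw1, one_mul]

theorem abs_sq_sub_sq_le_of_mem_Icc {x y : ℝ} (hx : x ∈ Icc (0 : ℝ) 1) (hy : y ∈ Icc (0 : ℝ) 1) :
    |x ^ 2 - y ^ 2| ≤ 2 * |x - y| := by
  rw [sq_sub_sq, abs_mul, abs_of_nonneg (by linarith [hx.1, hy.1])]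
  exact mul_le_mul_of_nonneg_right (by linarith [hx.2, hy.2]) (abs_nonneg _)

theorem abs_mul_one_sub_sub_le_of_mem_Icc {x y : ℝ} (hx : x ∈ Icc (0 : ℝ) 1)
    (hy : y ∈ Icc (0 : ℝ) 1) : |x * (1 - x) - y * (1 - y)| ≤ |x - y| := by
  have hxy : |1 - x - y| ≤ 1 := abs_le.2 ⟨by linarith [hx.2, hy.2], by linarith [hx.1, hy.1]⟩
  calc |x * (1 - x) - y * (1 - y)| = |x - y| * |1 - x - y| := by rw [← abs_mul]; ring_nf
    _ ≤ |x - y| := mul_le_of_le_one_right (abs_nonneg _) hxy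

variable (hw0 : ∀ j, 0 ≤ w j) (hw1 : ∑ j, w j = 1) {p q : ι → ℝ}
  (hp : ∀ j, p j ∈ Icc (0 : ℝ) 1) (hq : ∀ j, q j ∈ Icc (0 : ℝ) 1)
  {d : ℝ} (hpq : ∀ j, |p j - q j| ≤ d)
include hw0 hw1 hpq

theorem abs_weightedSum_sub_le : |∑ j, w j * p j - ∑ j, w j * q j| ≤ d :=
  abs_sum_sub_sum_le hw1 fun j => by
    rw [← mul_sub, abs_mul, abs_of_nonneg (hw0 j)]
    exact mul_le_mul_of_nonneg_left (hpq j) (hw0 j)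

include hp hq

theorem abs_weightedSecondMoment_sub_le :
    |weightedSecondMoment w p - weightedSecondMoment w q| ≤ 3 * d := by
  have hw : ∀ j, w j ≤ 1 := fun j => hw1 ▸ single_le_sum (fun k _ => hw0 k) (mem_univ j)
  have hsq := abs_sq_sub_sq_le_of_mem_Icc (weightedSum_mem_Icc hw0 hw1 hp)
    (weightedSum_mem_Icc hw0 hw1 hq)
  have hmean := abs_weightedSum_sub_le hw0 hw1 hpq
  have hvar : |∑ j, w j ^ 2 * p j * (1 - p j) - ∑ j, w j ^ 2 * q j * (1 - q j)| ≤ d :=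
    abs_sum_sub_sum_le hw1 fun j => by
      rw [mul_assoc, mul_assoc, ← mul_sub, abs_mul, abs_of_nonneg (sq_nonneg _)]
      exact mul_le_mul (pow_le_of_le_one (hw0 j) (hw j) two_ne_zero)
        ((abs_mul_one_sub_sub_le_of_mem_Icc (hp j) (hq j)).trans (hpq j)) (abs_nonneg _) (hw0 j)
  unfold weightedSecondMoment
  calc _ ≤ |(∑ j, w j * p j) ^ 2 - (∑ j, w j * q j) ^ 2|
        + |∑ j, w j ^ 2 * p j * (1 - p j) - ∑ j, w j ^ 2 * q j * (1 - q j)| := by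
        rw [add_sub_add_comm]; exact abs_add_le _ _
    _ ≤ 3 * d := by linarith

theorem abs_conformityIndex_sub_le (βh Δβ : ℝ) :
    |conformityIndex w βh Δβ p - conformityIndex w βh Δβ q| ≤ (|βh| + 3 / 2 * |Δβ|) * d := by
  have hmean := abs_weightedSum_sub_le hw0 hw1 hpq
  have hmoment := abs_weightedSecondMoment_sub_le hw0 hw1 hp hq hpq
  calc _ = |βh * (∑ j, w j * p j - ∑ j, w j * q j)
          + Δβ / 2 * (weightedSecondMoment w p - weightedSecondMoment w q)| := by
        unfold conformityIndex; ring_nf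
    _ ≤ |βh| * |∑ j, w j * p j - ∑ j, w j * q j|
          + |Δβ| / 2 * |weightedSecondMoment w p - weightedSecondMoment w q| := by
        refine (abs_add_le _ _).trans_eq ?_
        rw [abs_mul, abs_mul, abs_div, abs_two]
    _ ≤ |βh| * d + |Δβ| / 2 * (3 * d) := by gcongr
    _ = (|βh| + 3 / 2 * |Δβ|) * d := by ring

end WeightedSums

theorem stmt_0_general {n : ℕ} (G : Fin n → Fin n → ℝ)
    (hG0 : ∀ i j, 0 ≤ G i j) (hGr : ∀ i, ∑ j, G i j = 1)
    (F f : ℝ → ℝ) (hF : ∀ u, HasDerivAt F (f u) u) (fmax : ℝ)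
    (hf0 : ∀ u, 0 ≤ f u) (hfb : ∀ u, f u ≤ fmax)
    (hFcdf : ∀ u, F u ∈ Set.Icc (0 : ℝ) 1)
    (α : Fin n → ℝ) (βh Δβ : ℝ)
    (hβ : |βh| + (3/2) * |Δβ| < 1 / fmax)
    (Γ : (Fin n → ℝ) → (Fin n → ℝ))
    (hΓ : ∀ p i, Γ p i =
      F (α i + βh * ((∑ j, G i j * p j) - 1/2)
        + (Δβ/2) * ((∑ j, G i j * p j)^2 + ∑ j, (G i j)^2 * p j * (1 - p j)))) :
    (∀ p q : Fin n → ℝ, (∀ j, p j ∈ Set.Icc (0 : ℝ) 1) →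
      (∀ j, q j ∈ Set.Icc (0 : ℝ) 1) →
      dist (Γ p) (Γ q) ≤ fmax * (|βh| + (3/2) * |Δβ|) * dist p q)
    ∧ (∃! p : Fin n → ℝ, (∀ j, p j ∈ Set.Icc (0 : ℝ) 1) ∧ Γ p = p) := by
  have hfmax : 0 ≤ fmax := (hf0 0).trans (hfb 0)
  have hΓ' : ∀ p i, Γ p i = F (α i + conformityIndex (G i) βh Δβ p) := fun p i => by
    rw [hΓ, conformityIndex, weightedSecondMoment, add_assoc]
  have hcontr : ∀ p q : Fin n → ℝ, (∀ j, p j ∈ Icc (0 : ℝ) 1) → (∀ j, q j ∈ Icc (0 : ℝ) 1) →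
      dist (Γ p) (Γ q) ≤ fmax * (|βh| + (3/2) * |Δβ|) * dist p q := by
    intro p q hp hq
    refine (dist_pi_le_iff (by positivity)).2 fun i => ?_
    rw [Real.dist_eq, hΓ' p, hΓ' q, mul_assoc]
    refine (abs_sub_le_mul_of_hasDerivAt hF (fun u => (abs_of_nonneg (hf0 u)).trans_le (hfb u))
      _ _).trans ?_
    rw [add_sub_add_left_eq_sub]
    exact mul_le_mul_of_nonneg_left (abs_conformityIndex_sub_le (hG0 i) (hGr i) hp hq
      (fun j => Real.dist_eq (p j) (q j) ▸ dist_le_pi_dist p q j) βh Δβ) hfmax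
  have hK1 : fmax * (|βh| + (3/2) * |Δβ|) < 1 := by
    rcases hfmax.eq_or_lt with h | h
    · simp [← h]
    · rwa [lt_div_iff₀' h] at hβ
  refine ⟨hcontr, ?_⟩
  simpa only [mem_univ_pi] using exists_unique_fixedPoint_of_dist_le
    (isClosed_set_pi fun _ _ => isClosed_Icc) ⟨0, fun _ _ => ⟨le_rfl, zero_le_one⟩⟩
    (fun p _ => mem_univ_pi.2 fun i => hΓ p i ▸ hFcdf _) (by positivity) hK1
    fun p hp q hq => hcontr p q (mem_univ_pi.1 hp) (mem_univ_pi.1 hq)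

/-- The heterogeneous-conformity best-response map `Γ` is a sup-norm
contraction on `[0,1]^n` with constant `fmax * (|βh| + (3/2)|Δβ|)` and has a
unique fixed point in `[0,1]^n`. -/
theorem stmt_0 {n : ℕ} (hn : 1 ≤ n) (G : Fin n → Fin n → ℝ)
    (hG0 : ∀ i j, 0 ≤ G i j) (hGd : ∀ i, G i i = 0) (hGr : ∀ i, ∑ j, G i j = 1)
    (F f : ℝ → ℝ) (hF : ∀ u, HasDerivAt F (f u) u) (fmax : ℝ)
    (hf0 : ∀ u, 0 ≤ f u) (hfb : ∀ u, f u ≤ fmax)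
    (hFcdf : ∀ u, F u ∈ Set.Icc (0 : ℝ) 1)
    (α : Fin n → ℝ) (βh Δβ : ℝ)
    (hβ : |βh| + (3/2) * |Δβ| < 1 / fmax)
    (Γ : (Fin n → ℝ) → (Fin n → ℝ))
    (hΓ : ∀ p i, Γ p i =
      F (α i + βh * ((∑ j, G i j * p j) - 1/2)
        + (Δβ/2) * ((∑ j, G i j * p j)^2 + ∑ j, (G i j)^2 * p j * (1 - p j)))) :
    (∀ p q : Fin n → ℝ, (∀ j, p j ∈ Set.Icc (0 : ℝ) 1) →
      (∀ j, q j ∈ Set.Icc (0 : ℝ) 1) →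
      dist (Γ p) (Γ q) ≤ fmax * (|βh| + (3/2) * |Δβ|) * dist p q)
    ∧ (∃! p : Fin n → ℝ, (∀ j, p j ∈ Set.Icc (0 : ℝ) 1) ∧ Γ p = p) :=
  stmt_0_general G hG0 hGr F f hF fmax hf0 hfb hFcdf α βh Δβ hβ Γ hΓ
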